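/- arXiv:1812.04689 — 5 statements merged into one kernel-verified Lean document; each statement's English description precedes it below -/
import Mathlib

section
/- Let φ be a fixedpoint-free C¹ flow on ℝ² and f = φ¹ its time-one map. Suppose y ∈ J⁺_φ(x). Then for every ε > 0, the discrete forward prolongation J⁺_f(x) meets the orbit arc I_ε = {φ^s(y) : s ∈ [-ε, 1+ε]}. -/
open Filter Topology Function Set

/-- A (continuous) flow on the plane ℝ². -/
def IsFlow (φ : ℝ → ℝ × ℝ → ℝ × ℝ) : Prop :=
  Continuous (uncurry φ) ∧ (∀ p, φ 0 p = p) ∧ ∀ s t p, φ s (φ t p) = φ (s + t) p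

/-- The flow has no fixedpoint. -/
def FixedpointFree (φ : ℝ → ℝ × ℝ → ℝ × ℝ) : Prop :=
  ∀ p : ℝ × ℝ, ∃ t : ℝ, φ t p ≠ p

/-- The orbit of a point under a flow. -/
def flowOrbit (φ : ℝ → ℝ × ℝ → ℝ × ℝ) (p : ℝ × ℝ) : Set (ℝ × ℝ) :=
  Set.range (fun t => φ t p)

/-- A C¹ flow: continuously differentiable with nowhere-vanishing velocity field. -/
def IsC1Flow (φ : ℝ → ℝ × ℝ → ℝ × ℝ) : Prop :=
  IsFlow φ ∧ ContDiff ℝ 1 (uncurry φ) ∧ ∀ p : ℝ × ℝ, deriv (fun t => φ t p) 0 ≠ 0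

/-- The orbit foliation of φ is trivial: some self-homeomorphism of the plane
takes every orbit to a horizontal line. -/
def TrivialFoliation (φ : ℝ → ℝ × ℝ → ℝ × ℝ) : Prop :=
  ∃ H : (ℝ × ℝ) ≃ₜ (ℝ × ℝ), ∀ p : ℝ × ℝ, ∃ c : ℝ,
    H '' flowOrbit φ p = {q : ℝ × ℝ | q.2 = c}

/-- Forward prolongation of `x` under the flow `φ`. -/
def JplusFlow (φ : ℝ → ℝ × ℝ → ℝ × ℝ) (x : ℝ × ℝ) : Set (ℝ × ℝ) :=
  {y | ∃ (xs : ℕ → ℝ × ℝ) (ts : ℕ → ℝ),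
    Tendsto xs atTop (𝓝 x) ∧ Tendsto ts atTop atTop ∧
    Tendsto (fun n => φ (ts n) (xs n)) atTop (𝓝 y)}

/-- Forward prolongation of `x` under a map `f` (iterates `kₙ → +∞`). -/
def JplusMap (f : ℝ × ℝ → ℝ × ℝ) (x : ℝ × ℝ) : Set (ℝ × ℝ) :=
  {y | ∃ (xs : ℕ → ℝ × ℝ) (ks : ℕ → ℕ),
    Tendsto xs atTop (𝓝 x) ∧ Tendsto ks atTop atTop ∧
    Tendsto (fun n => f^[ks n] (xs n)) atTop (𝓝 y)}

/-- if `y ∈ J⁺_φ(x)` then for every ε > 0 the discrete forward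
prolongation `J⁺_f(x)` of the time-one map `f = φ¹` meets the orbit arc
`{φ^s(y) : s ∈ [-ε, 1+ε]}`. -/
theorem discrete_prolongation_meets_eps_arc
    (φ : ℝ → ℝ × ℝ → ℝ × ℝ) (hφ : IsC1Flow φ) (hfree : FixedpointFree φ)
    (x y : ℝ × ℝ) (hy : y ∈ JplusFlow φ x) (ε : ℝ) (hε : 0 < ε) :
    (JplusMap (φ 1) x ∩ (fun s => φ s y) '' Set.Icc (-ε) (1 + ε)).Nonempty := by
  obtain ⟨hflow, _, _⟩ := hφ
  obtain ⟨hcont, hzero, hadd⟩ := hflow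
  obtain ⟨xs, ts, hxs, hts, hlim⟩ := hy
  -- time-one map iterates
  have hiter : ∀ (k : ℕ) (p : ℝ × ℝ), (φ 1)^[k] p = φ (k : ℝ) p := by
    intro k
    induction k with
    | zero => intro p; simpa using (hzero p).symm
    | succ n ih =>
      intro p
      rw [Function.iterate_succ_apply', ih, hadd]
      norm_num [add_comm]
  -- fractional parts, subsequence
  set s : ℕ → ℝ := fun n => Int.fract (ts n) with hs
  have hmem : ∀ n, s n ∈ Set.Icc (0 : ℝ) 1 :=
    fun n => ⟨Int.fract_nonneg _, (Int.fract_lt_one _).le⟩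
  obtain ⟨r, hr_mem, σ, hσmono, hσlim⟩ := isCompact_Icc.tendsto_subseq hmem
  have hσtop : Tendsto σ atTop atTop := hσmono.tendsto_atTop
  set ks : ℕ → ℕ := fun n => (⌊ts (σ n)⌋).toNat + 1 with hks
  -- ks → ∞
  have hkstop : Tendsto ks atTop atTop := by
    rw [tendsto_atTop]
    intro b
    have : ∀ᶠ n in atTop, (b : ℝ) ≤ ts (σ n) :=
      (hts.comp hσtop).eventually (eventually_ge_atTop (b : ℝ))
    filter_upwards [this] with n hn
    have h1 : (b : ℤ) ≤ ⌊ts (σ n)⌋ := Int.le_floor.2 (by exact_mod_cast hn)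
    have h2 : b ≤ (⌊ts (σ n)⌋).toNat := by omega
    exact le_trans h2 (Nat.le_succ _)
  refine ⟨φ (1 - r) y, ⟨fun n => xs (σ n), ks, hxs.comp hσtop, hkstop, ?_⟩,
    1 - r, ⟨by linarith [hr_mem.2], by linarith [hr_mem.1]⟩, rfl⟩
  -- convergence of the iterates
  have hev : ∀ᶠ n in atTop, (φ 1)^[ks n] (xs (σ n))
      = φ (1 - s (σ n)) (φ (ts (σ n)) (xs (σ n))) := by
    have : ∀ᶠ n in atTop, (0 : ℝ) ≤ ts (σ n) :=
      (hts.comp hσtop).eventually (eventually_ge_atTop (0 : ℝ))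
    filter_upwards [this] with n hn
    have hfl : (0 : ℤ) ≤ ⌊ts (σ n)⌋ := Int.le_floor.2 (by exact_mod_cast hn)
    have hcast : ((ks n : ℕ) : ℝ) = (1 - s (σ n)) + ts (σ n) := by
      have : ((⌊ts (σ n)⌋).toNat : ℝ) = (⌊ts (σ n)⌋ : ℝ) := by
        exact_mod_cast Int.toNat_of_nonneg hfl
      simp only [hks, hs, Int.fract]
      push_cast [this]
      ring
    rw [hiter, hcast, hadd]
  apply Tendsto.congr' (EventuallyEq.symm hev)
  have hpair : Tendsto (fun n => (1 - s (σ n), φ (ts (σ n)) (xs (σ n)))) atTop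
      (𝓝 (1 - r, y)) :=
    ((tendsto_const_nhds.sub hσlim).prodMk_nhds (hlim.comp hσtop))
  exact (hcont.tendsto (1 - r, y)).comp hpair
end

section
/- Let φ be a fixedpoint-free C¹ flow on ℝ² and f = φ¹ its time-one map. If y ∈ J⁺_φ(x), then the discrete forward prolongation J⁺_f(x) meets the orbit arc {φ^s(y) : s ∈ [0, 1]}. -/
open Filter Topology Function Set

lemma flow_iterate {φ : ℝ → ℝ × ℝ → ℝ × ℝ} (hφ : IsFlow φ) (k : ℕ) (p : ℝ × ℝ) :
    (φ 1)^[k] p = φ (k : ℝ) p := by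
  induction k with
  | zero => simp [hφ.2.1 p]
  | succ n ih =>
      rw [Function.iterate_succ_apply', ih, hφ.2.2]
      congr 1
      push_cast
      ring

/-- if `y ∈ J⁺_φ(x)` then the discrete forward prolongation
`J⁺_f(x)` of the time-one map `f = φ¹` meets the orbit arc `{φ^s(y) : s ∈ [0,1]}`. -/
theorem discrete_prolongation_meets_unit_arc
    (φ : ℝ → ℝ × ℝ → ℝ × ℝ) (hφ : IsC1Flow φ) (hfree : FixedpointFree φ)
    (x y : ℝ × ℝ) (hy : y ∈ JplusFlow φ x) :
    (JplusMap (φ 1) x ∩ (fun s => φ s y) '' Set.Icc (0 : ℝ) 1).Nonempty := by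
  obtain ⟨hflow, hC1, hvel⟩ := hφ
  obtain ⟨hcont, h0, hadd⟩ := hflow
  obtain ⟨xs, ts, hxs, hts, hconv⟩ := hy
  -- shift so that ts ≥ 0
  obtain ⟨N, hN⟩ := (hts.eventually_ge_atTop 0).exists_forall_of_atTop
  set xs' : ℕ → ℝ × ℝ := fun n => xs (n + N) with hxs'def
  set ts' : ℕ → ℝ := fun n => ts (n + N) with hts'def
  have hxs' : Tendsto xs' atTop (𝓝 x) := hxs.comp (tendsto_add_atTop_nat N)
  have hts' : Tendsto ts' atTop atTop := hts.comp (tendsto_add_atTop_nat N)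
  have hconv' : Tendsto (fun n => φ (ts' n) (xs' n)) atTop (𝓝 y) :=
    hconv.comp (tendsto_add_atTop_nat N)
  have hts'0 : ∀ n, 0 ≤ ts' n := fun n => hN (n + N) (Nat.le_add_left N n)
  set k : ℕ → ℕ := fun n => (⌊ts' n⌋).toNat + 1 with hkdef
  set u : ℕ → ℝ := fun n => (k n : ℝ) - ts' n with hudef
  have hkcast : ∀ n, (k n : ℝ) = (⌊ts' n⌋ : ℝ) + 1 := by
    intro n
    have h : ((⌊ts' n⌋.toNat : ℤ) : ℝ) = ((⌊ts' n⌋ : ℤ) : ℝ) := by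
      exact_mod_cast congrArg (Int.cast : ℤ → ℝ)
        (Int.toNat_of_nonneg (Int.floor_nonneg.2 (hts'0 n)))
    simp only [hkdef]
    push_cast at h ⊢
    linarith
  have humem : ∀ n, u n ∈ Set.Icc (0 : ℝ) 1 := by
    intro n
    have h1 := Int.floor_le (ts' n)
    have h2 := Int.lt_floor_add_one (ts' n)
    constructor
    · simp only [hudef, hkcast n]; linarith
    · simp only [hudef, hkcast n]; linarith
  obtain ⟨s, hs, ψ, hψmono, hψconv⟩ :=
    isCompact_Icc.tendsto_subseq humem
  refine ⟨φ s y, ⟨xs' ∘ ψ, k ∘ ψ, hxs'.comp hψmono.tendsto_atTop, ?_, ?_⟩,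
    ⟨s, hs, rfl⟩⟩
  · rw [← tendsto_natCast_atTop_iff (R := ℝ)]
    refine tendsto_atTop_mono (fun m => ?_) (hts'.comp hψmono.tendsto_atTop)
    have := (humem (ψ m)).1
    simp only [hudef] at this
    simpa using by linarith
  · have key : ∀ m, (φ 1)^[(k ∘ ψ) m] ((xs' ∘ ψ) m)
        = φ (u (ψ m)) (φ (ts' (ψ m)) (xs' (ψ m))) := by
      intro m
      rw [flow_iterate ⟨hcont, h0, hadd⟩, hadd]
      simp [hudef]
    simp only [key]
    have htprod : Tendsto (fun m => (u (ψ m), φ (ts' (ψ m)) (xs' (ψ m)))) atTop (𝓝 (s, y)) :=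
      hψconv.prodMk_nhds (hconv'.comp hψmono.tendsto_atTop)
    exact (hcont.tendsto (s, y)).comp htprod
end

section
/- Let φ be a fixedpoint-free continuous flow on ℝ² whose orbit foliation is trivial. Then there is a homeomorphism h : ℝ² → ℝ² which is equivariant with respect to φ and the translation flow Φ^t(x,y) = (x+t, y): for all p ∈ ℝ² and all t ∈ ℝ, h(φ^t(p)) = h(p) + (t, 0). -/
/-!
Conjugating by the homeomorphism that straightens the orbit foliation, we may assume that the
orbits are the horizontal lines `ℝ × {c}`. Then `t ↦ φ^t(0, c)` parametrizes the line of height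
`c`, injectively because a periodic orbit would be compact. Hence `E (t, c) = φ^t(0, c)` is a
continuous bijection of the plane that conjugates the translation flow to `φ`; its inverse is
continuous because each `t ↦ φ^t(0, c)` is a monotone homeomorphism of the line, so `E⁻¹` is the
required equivariant homeomorphism.
-/

open Filter Topology Function Set

section FiberwiseHomeomorph

variable {X : Type*} [TopologicalSpace X]

theorem continuous_uncurry_of_rightInverse {f : X → ℝ → ℝ} (hf : Continuous (uncurry f))
    (hinj : ∀ x, Injective (f x)) {τ : X → ℝ → ℝ} (hτ : ∀ x y, f x (τ x y) = y) :
    Continuous (uncurry τ) := by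
  have hf_at : ∀ t, Continuous fun x => f x t := fun t =>
    hf.comp (continuous_id.prodMk continuous_const)
  have hf_fib : ∀ x, Continuous (f x) := fun x =>
    hf.comp (continuous_const.prodMk continuous_id)
  refine continuous_iff_continuousAt.2 fun ⟨x₀, y₀⟩ => ?_
  refine Metric.nhds_basis_closedBall.tendsto_right_iff.2 fun ε hε => ?_
  set t₀ := τ x₀ y₀
  -- `f x₀` is monotone, so `(x₀, y₀) ∈ U`; for `(x, y) ∈ U` the intermediate value theorem
  -- puts the unique preimage `τ x y` of `y` in `[t₀ - ε, t₀ + ε]`.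
  let U : Set (X × ℝ) := {p | p.2 ∈ uIoo (f p.1 (t₀ - ε)) (f p.1 (t₀ + ε))}
  have hU : IsOpen U :=
    (isOpen_lt ((hf_at _).fst'.min (hf_at _).fst') continuous_snd).inter
      (isOpen_lt continuous_snd ((hf_at _).fst'.max (hf_at _).fst'))
  have hmem : (x₀, y₀) ∈ U := by
    have h₁ : t₀ - ε < t₀ := by linarith
    have h₂ : t₀ < t₀ + ε := by linarith
    show y₀ ∈ uIoo _ _
    rw [← hτ x₀ y₀]
    rcases (hf_fib x₀).strictMono_of_inj (hinj x₀) with hmono | hanti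
    · exact mem_uIoo_of_lt (hmono h₁) (hmono h₂)
    · exact mem_uIoo_of_gt (hanti h₂) (hanti h₁)
  filter_upwards [hU.mem_nhds hmem] with ⟨x, y⟩ hxy
  obtain ⟨t, ht, hft⟩ := intermediate_value_uIcc (hf_fib x).continuousOn
    (uIoo_subset_uIcc_self hxy)
  have hτt : τ x y = t := hinj x (by rw [hτ]; exact hft.symm)
  rw [uIcc_of_le (by linarith)] at ht
  show τ x y ∈ Metric.closedBall t₀ ε
  rwa [hτt, Real.closedBall_eq_Icc]

noncomputable def fiberwiseHomeomorph (f : X → ℝ → ℝ) (hf : Continuous (uncurry f))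
    (hbij : ∀ x, Bijective (f x)) : ℝ × X ≃ₜ ℝ × X where
  toFun p := (f p.2 p.1, p.2)
  invFun p := ((Equiv.ofBijective _ (hbij p.2)).symm p.1, p.2)
  left_inv p := Prod.ext ((Equiv.ofBijective _ (hbij p.2)).symm_apply_apply p.1) rfl
  right_inv p := Prod.ext ((Equiv.ofBijective _ (hbij p.2)).apply_symm_apply p.1) rfl
  continuous_toFun := (hf.comp continuous_swap).prodMk continuous_snd
  continuous_invFun :=
    ((continuous_uncurry_of_rightInverse hf (fun x => (hbij x).injective)
      fun x => (Equiv.ofBijective _ (hbij x)).apply_symm_apply).comp continuous_swap).prodMk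
      continuous_snd

end FiberwiseHomeomorph

def conjFlow (H : (ℝ × ℝ) ≃ₜ (ℝ × ℝ)) (φ : ℝ → ℝ × ℝ → ℝ × ℝ) : ℝ → ℝ × ℝ → ℝ × ℝ :=
  fun t q => H (φ t (H.symm q))

section Flow

variable {φ : ℝ → ℝ × ℝ → ℝ × ℝ}

theorem IsFlow.mem_flowOrbit_self (hφ : IsFlow φ) (p : ℝ × ℝ) : p ∈ flowOrbit φ p :=
  ⟨0, hφ.2.1 p⟩

theorem IsFlow.conjFlow (hφ : IsFlow φ) (H : (ℝ × ℝ) ≃ₜ (ℝ × ℝ)) : IsFlow (conjFlow H φ) := by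
  obtain ⟨hcont, hzero, hcomp⟩ := hφ
  refine ⟨?_, fun q => ?_, fun s t q => ?_⟩
  · exact H.continuous.comp (hcont.comp (continuous_fst.prodMk (H.symm.continuous.comp
      continuous_snd)))
  · simp [_root_.conjFlow, hzero]
  · simp [_root_.conjFlow, hcomp]

theorem flowOrbit_conjFlow (H : (ℝ × ℝ) ≃ₜ (ℝ × ℝ)) (q : ℝ × ℝ) :
    flowOrbit (conjFlow H φ) q = H '' flowOrbit φ (H.symm q) :=
  range_comp H fun t => φ t (H.symm q)

theorem TrivialFoliation.exists_flowOrbit_conjFlow_eq (htriv : TrivialFoliation φ)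
    (hφ : IsFlow φ) :
    ∃ H : (ℝ × ℝ) ≃ₜ (ℝ × ℝ), ∀ q, flowOrbit (conjFlow H φ) q = {r | r.2 = q.2} := by
  obtain ⟨H, hH⟩ := htriv
  refine ⟨H, fun q => ?_⟩
  obtain ⟨c, hc⟩ := hH (H.symm q)
  have hq := (hφ.conjFlow H).mem_flowOrbit_self q
  rw [flowOrbit_conjFlow, hc] at hq ⊢
  rw [hq]

theorem IsFlow.isCompact_flowOrbit_of_apply_eq (hφ : IsFlow φ) {p : ℝ × ℝ} {a b : ℝ}
    (hab : a ≠ b) (h : φ a p = φ b p) : IsCompact (flowOrbit φ p) := by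
  obtain ⟨hcont, hzero, hcomp⟩ := hφ
  have hfix : φ (a - b) p = p := by
    rw [sub_eq_neg_add, ← hcomp, h, hcomp, neg_add_cancel, hzero]
  have hper : Periodic (fun t => φ t p) (a - b) := fun t => by
    simp only [← hcomp t (a - b), hfix]
  exact hper.compact_of_continuous (sub_ne_zero.2 hab)
    (hcont.comp (continuous_id.prodMk continuous_const))

theorem not_isCompact_horizontal_line (c : ℝ) : ¬IsCompact {q : ℝ × ℝ | q.2 = c} := by
  intro hK
  have hfst : Prod.fst '' {q : ℝ × ℝ | q.2 = c} = univ :=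
    eq_univ_of_forall fun x => ⟨(x, c), rfl, rfl⟩
  exact noncompact_univ ℝ (hfst ▸ hK.image continuous_fst)

theorem IsFlow.exists_conj_translation_of_flowOrbit_eq (hφ : IsFlow φ)
    (horb : ∀ q, flowOrbit φ q = {r | r.2 = q.2}) :
    ∃ h : (ℝ × ℝ) ≃ₜ (ℝ × ℝ), ∀ p t, h (φ t p) = h p + (t, 0) := by
  set f : ℝ → ℝ → ℝ := fun c t => (φ t (0, c)).1
  have hφf : ∀ c t, φ t (0, c) = (f c t, c) := fun c t => by
    have hmem : φ t (0, c) ∈ flowOrbit φ (0, c) := ⟨t, rfl⟩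
    rw [horb] at hmem
    exact Prod.ext rfl hmem
  have hf : Continuous (uncurry f) :=
    continuous_fst.comp
      (hφ.1.comp (continuous_snd.prodMk (continuous_const.prodMk continuous_fst)))
  have hbij : ∀ c, Bijective (f c) := by
    refine fun c => ⟨fun a b hab => ?_, fun x => ?_⟩
    · by_contra hne
      refine not_isCompact_horizontal_line c ?_
      have := hφ.isCompact_flowOrbit_of_apply_eq hne (by rw [hφf, hφf, hab])
      rwa [horb] at this
    · obtain ⟨t, ht⟩ : (x, c) ∈ flowOrbit φ (0, c) := by rw [horb]; rfl
      exact ⟨t, congrArg Prod.fst ht⟩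
  set E := fiberwiseHomeomorph f hf hbij
  have hE : ∀ s c, E (s, c) = φ s (0, c) := fun s c => (hφf c s).symm
  refine ⟨E.symm, fun p t => ?_⟩
  obtain ⟨⟨s, c⟩, rfl⟩ := E.surjective p
  rw [E.symm_apply_apply, hE, hφ.2.2, ← hE, E.symm_apply_apply, Prod.mk_add_mk, add_zero,
    add_comm]

end Flow

theorem trivial_foliation_flow_conjugate_to_translation_flow_general
    (φ : ℝ → ℝ × ℝ → ℝ × ℝ) (hφ : IsFlow φ)
    (htriv : TrivialFoliation φ) :
    ∃ h : (ℝ × ℝ) ≃ₜ (ℝ × ℝ), ∀ (p : ℝ × ℝ) (t : ℝ),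
      h (φ t p) = h p + (t, 0) := by
  obtain ⟨H, hH⟩ := htriv.exists_flowOrbit_conjFlow_eq hφ
  obtain ⟨h, hh⟩ := (hφ.conjFlow H).exists_conj_translation_of_flowOrbit_eq hH
  refine ⟨H.trans h, fun p t => ?_⟩
  simpa only [conjFlow, Homeomorph.trans_apply, Homeomorph.symm_apply_apply] using hh (H p) t

/-- a fixedpoint-free flow on ℝ² with trivial orbit foliation is
topologically equivariant with the translation flow `Φ^t(x,y) = (x+t,y)`. -/
theorem trivial_foliation_flow_conjugate_to_translation_flow
    (φ : ℝ → ℝ × ℝ → ℝ × ℝ) (hφ : IsFlow φ) (hfree : FixedpointFree φ)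
    (htriv : TrivialFoliation φ) :
    ∃ h : (ℝ × ℝ) ≃ₜ (ℝ × ℝ), ∀ (p : ℝ × ℝ) (t : ℝ),
      h (φ t p) = h p + (t, 0) :=
  trivial_foliation_flow_conjugate_to_translation_flow_general φ hφ htriv
end

section
/- Let φ be a continuous flow on ℝ². If φ has a nonstationary periodic point, i.e. a point p and a time T > 0 with φ^T(p) = p but φ^t(p) ≠ p for some t, then φ has a fixedpoint: there exists q ∈ ℝ² with φ^t(q) = q for all t ∈ ℝ. -/
open Filter Topology Function Set

/-!
Suppose there is no fixedpoint, and let `τ` be the least period of the orbit `γ t = φ t p`, seen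
in `ℂ`. For `0 < s < τ` the chord loops `t ↦ γ (s + t) - γ t`, `t ∈ [0, τ]`, avoid `0`, so they all
have the same winding number. For `s = τ / 2` the chord loop is antiperiodic, so its winding number
is odd. For small `s` the time-`s` map has no fixedpoint on a disc containing the orbit, by
compactness; contracting the orbit radially inside that disc deforms the chord loop
`t ↦ φ s (γ t) - γ t` to a constant, so its winding number is zero.
-/

section ContinuousLog

variable {X : Type*} [TopologicalSpace X]

def IsContinuousLog (θ f : X → ℂ) : Prop :=
  Continuous θ ∧ ∀ x, Complex.exp (θ x) = f x

theorem exists_isContinuousLog [SimplyConnectedSpace X] [LocallyPathConnectedSpace X]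
    {f : X → ℂ} (hf : Continuous f) (hf0 : ∀ x, f x ≠ 0) : ∃ θ, IsContinuousLog θ f := by
  obtain ⟨x₀⟩ : Nonempty X := inferInstance
  obtain ⟨θ, ⟨-, hθ⟩, -⟩ := Complex.isCoveringMapOn_exp.existsUnique_continuousMap_lifts
    ⟨f, hf⟩ (Complex.exp_log (hf0 x₀)) hf0
  exact ⟨θ, θ.continuous, congrFun hθ⟩

namespace IsContinuousLog

variable {θ θ' f : X → ℂ}

theorem comp {Y : Type*} [TopologicalSpace Y] (h : IsContinuousLog θ f) {g : Y → X}
    (hg : Continuous g) : IsContinuousLog (θ ∘ g) (f ∘ g) :=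
  ⟨h.1.comp hg, fun y => h.2 (g y)⟩

theorem sub_eq_sub [PreconnectedSpace X] (h : IsContinuousLog θ f) (h' : IsContinuousLog θ' f)
    (x y : X) : θ x - θ' x = θ y - θ' y := by
  have hexp : ∀ x, Complex.exp (θ x - θ' x) = 1 := fun x => by
    rw [Complex.exp_sub, h.2, ← h'.2, div_self (Complex.exp_ne_zero _)]
  exact Complex.isCoveringMap_exp.const_of_comp (h.1.sub h'.1)
    (fun a b => Subtype.ext (by simp only [Pi.sub_apply, hexp])) x y

end IsContinuousLog

end ContinuousLog

namespace IsContinuousLog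

theorem sub_eq_of_homotopy {F : ℝ → ℝ → ℂ} {a b T : ℝ} {θa θb : ℝ → ℂ}
    (hF : Continuous (uncurry F)) (hab : a ≤ b) (hF0 : ∀ v ∈ Icc a b, ∀ t, F v t ≠ 0)
    (hloop : ∀ v ∈ Icc a b, F v T = F v 0)
    (ha : IsContinuousLog θa (F a)) (hb : IsContinuousLog θb (F b)) :
    θa T - θa 0 = θb T - θb 0 := by
  let G : ℝ × ℝ → ℂ := fun x => F (projIcc a b hab x.1) x.2
  have hG : Continuous G :=
    hF.comp ((continuous_subtype_val.comp (continuous_projIcc (h := hab))).prodMap continuous_id)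
  obtain ⟨Θ, hΘ⟩ := exists_isContinuousLog hG fun x => hF0 _ (projIcc a b hab x.1).2 _
  have hslice : ∀ v ∈ Icc a b, IsContinuousLog (fun t => Θ (v, t)) (F v) := fun v hv =>
    ⟨hΘ.1.comp (continuous_const.prodMk continuous_id),
      fun t => by simp [hΘ.2, G, projIcc_of_mem hab hv]⟩
  have hends : Θ (a, T) - Θ (a, 0) = Θ (b, T) - Θ (b, 0) := by
    have hT : IsContinuousLog (fun v => Θ (v, T)) (fun v => G (v, T)) :=
      ⟨hΘ.1.comp (continuous_id.prodMk continuous_const), fun v => hΘ.2 _⟩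
    have h0 : IsContinuousLog (fun v => Θ (v, 0)) (fun v => G (v, T)) :=
      ⟨hΘ.1.comp (continuous_id.prodMk continuous_const),
        fun v => (hΘ.2 _).trans (hloop _ (projIcc a b hab v).2).symm⟩
    exact hT.sub_eq_sub h0 a b
  have ha' := ha.sub_eq_sub (hslice a (left_mem_Icc.2 hab)) T 0
  have hb' := hb.sub_eq_sub (hslice b (right_mem_Icc.2 hab)) T 0
  linear_combination ha' + hends - hb'

theorem sub_ne_zero_of_antiperiodic {θ f : ℝ → ℂ} {c : ℝ}
    (h : IsContinuousLog θ f) (hf : Antiperiodic f c) (hf0 : f 0 ≠ 0) :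
    θ (c + c) - θ 0 ≠ 0 := by
  have hshift : IsContinuousLog (fun t => θ (t + c)) (fun t => f (t + c)) :=
    h.comp (continuous_add_const c)
  have hturn : IsContinuousLog (fun t => θ t + Real.pi * Complex.I) (fun t => f (t + c)) :=
    ⟨h.1.add continuous_const, fun t => by
      rw [Complex.exp_add, Complex.exp_pi_mul_I, h.2, mul_neg_one, ← hf t]⟩
  have hstep := hshift.sub_eq_sub hturn c 0
  intro hzero
  have hc : θ (0 + c) = θ 0 := by
    simp only [zero_add] at hstep ⊢
    linear_combination (hzero - hstep) / 2
  have := hf 0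
  rw [← h.2, hc, h.2] at this
  exact hf0 (CharZero.eq_neg_self_iff.1 this)

end IsContinuousLog

namespace Flow

section Periods

variable {G X : Type*} [TopologicalSpace G] [AddGroup G] [TopologicalSpace X]
  (ϕ : Flow G X)

def periods (x : X) : AddSubgroup G where
  carrier := {t | ϕ t x = x}
  add_mem' {s t} (hs : ϕ s x = x) (ht : ϕ t x = x) :=
    show ϕ (s + t) x = x by rw [map_add, ht, hs]
  zero_mem' := ϕ.map_zero_apply x
  neg_mem' {t} (ht : ϕ t x = x) :=
    show ϕ (-t) x = x by conv_lhs => rw [← ht, ← map_add, neg_add_cancel, map_zero_apply]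

theorem mem_periods {x : X} {t : G} : t ∈ ϕ.periods x ↔ ϕ t x = x := Iff.rfl

theorem isClosed_periods [T1Space X] (x : X) : IsClosed (ϕ.periods x : Set G) :=
  isClosed_singleton.preimage (ϕ.continuous continuous_id continuous_const)

end Periods

variable {X : Type*} [TopologicalSpace X] (ϕ : Flow ℝ X)

theorem exists_isLeast_period [T1Space X] {x : X} {T : ℝ} (hT : 0 < T) (hTx : ϕ T x = x)
    (hx : ∃ t, ϕ t x ≠ x) : ∃ τ, IsLeast {t | 0 < t ∧ ϕ t x = x} τ := by
  have hnd : ¬Dense (ϕ.periods x : Set ℝ) := fun hd => by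
    obtain ⟨t, ht⟩ := hx
    have huniv : (ϕ.periods x : Set ℝ) = univ :=
      (ϕ.isClosed_periods x).closure_eq ▸ hd.closure_eq
    exact ht ((ϕ.mem_periods).1 (SetLike.mem_coe.1 (huniv ▸ mem_univ t)))
  obtain ⟨ε, hε, hdisj⟩ : ∃ ε > 0, Disjoint (ϕ.periods x : Set ℝ) (Ioo 0 ε) := by
    by_contra! h
    exact hnd ((ϕ.periods x).dense_of_not_isolated_zero fun ε hε =>
      not_disjoint_iff.1 (h ε hε))
  have hbot : ϕ.periods x ≠ ⊥ := fun h =>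
    hT.ne' ((AddSubgroup.mem_bot).1 (h ▸ (ϕ.mem_periods).2 hTx))
  obtain ⟨τ, hτ⟩ := AddSubgroup.exists_isLeast_pos hbot hε hdisj
  exact ⟨τ, by simpa only [mem_periods, and_comm] using hτ⟩

theorem eventually_apply_ne_self [T2Space X] {q : X} (hq : ∃ t, ϕ t q ≠ q) :
    ∀ᶠ y : ℝ × X in 𝓝 (0, q), 0 < y.1 → ϕ y.1 y.2 ≠ y.2 := by
  obtain ⟨t₀, ht₀⟩ := hq
  obtain ⟨U, V, hU, hV, hqU, hqV, hUV⟩ := t2_separation ht₀.symm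
  have hnear : ∀ᶠ y : ℝ × X in 𝓝 0 ×ˢ 𝓝 q, ϕ y.1 y.2 ∈ U := by
    rw [← nhds_prod_eq]
    exact ϕ.cont'.continuousAt.preimage_mem_nhds (by simpa using hU.mem_nhds hqU)
  obtain ⟨u, hu, w, hw, huw⟩ := Filter.mem_prod_iff.1 hnear
  obtain ⟨ε, hε, hball⟩ := Metric.mem_nhds_iff.1 hu
  have hfar : ∀ᶠ y in 𝓝 q, ϕ t₀ y ∈ V :=
    (ϕ.continuous_toFun t₀).continuousAt.preimage_mem_nhds (hV.mem_nhds hqV)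
  filter_upwards [prod_mem_nhds (Metric.ball_mem_nhds 0 hε) (inter_mem hw hfar)]
    with ⟨s, y⟩ ⟨hsε, hyw, hyV⟩ hs hys
  -- `y` is `s`-periodic, so `ϕ t₀ y = ϕ r y` for the residue `r ∈ [0, s)` of `t₀` mod `s`.
  set r := toIcoMod hs 0 t₀
  have hr : ϕ t₀ y = ϕ r y := by
    rw [← toIcoMod_add_toIcoDiv_zsmul hs 0 t₀, map_add,
      (ϕ.mem_periods).1 (zsmul_mem ((ϕ.mem_periods).2 hys) _)]
  have hrε : r ∈ Metric.ball (0 : ℝ) ε := by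
    obtain ⟨hr0, hrs⟩ : r ∈ Ico 0 s := by simpa using toIcoMod_mem_Ico hs 0 t₀
    rw [mem_ball_zero_iff, Real.norm_eq_abs] at hsε ⊢
    rw [abs_of_nonneg hr0]
    exact hrs.trans_le ((le_abs_self s).trans hsε.le)
  have hrU : ϕ r y ∈ U := huw (show (r, y) ∈ u ×ˢ w from ⟨hball hrε, hyw⟩)
  exact disjoint_left.1 hUV hrU (hr ▸ hyV)

theorem exists_pos_forall_apply_ne_self [T2Space X] {K : Set X} (hK : IsCompact K)
    (hK0 : ∀ x ∈ K, ∃ t, ϕ t x ≠ x) : ∃ δ > 0, ∀ s ∈ Ioo 0 δ, ∀ x ∈ K, ϕ s x ≠ x := by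
  obtain ⟨δ, hδ, h⟩ := Metric.eventually_nhds_iff_ball.1 <|
    hK.eventually_forall_of_forall_eventually (P := fun s x => 0 < s → ϕ s x ≠ x)
      fun x hx => ϕ.eventually_apply_ne_self (hK0 x hx)
  refine ⟨δ, hδ, fun s hs x hx => h s ?_ x hx hs.1⟩
  rw [mem_ball_zero_iff, Real.norm_eq_abs, abs_of_pos hs.1]
  exact hs.2

section Plane

variable (ϕ : Flow ℝ ℂ) (z : ℂ)

def chord (s t : ℝ) : ℂ := ϕ s (ϕ t z) - ϕ t z

theorem continuous_chord : Continuous (uncurry (ϕ.chord z)) := by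
  unfold chord
  fun_prop

variable {ϕ z} {τ : ℝ}

theorem chord_ne_zero (hτ : IsLeast {t | 0 < t ∧ ϕ t z = z} τ) {s : ℝ} (hs : s ∈ Ioo 0 τ)
    (t : ℝ) : ϕ.chord z s t ≠ 0 := by
  intro h
  rw [chord, sub_eq_zero, ← map_add, add_comm, map_add] at h
  exact (hτ.2 ⟨hs.1, (ϕ.toHomeomorph t).injective h⟩).not_gt hs.2

theorem chord_period (hτz : ϕ τ z = z) (s : ℝ) : ϕ.chord z s τ = ϕ.chord z s 0 := by
  rw [chord, chord, hτz, map_zero_apply]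

theorem antiperiodic_chord_half (hτz : ϕ τ z = z) : Antiperiodic (ϕ.chord z (τ / 2)) (τ / 2) := by
  intro t
  have hback : ϕ (τ / 2) (ϕ (t + τ / 2) z) = ϕ t z := by
    rw [← map_add, show τ / 2 + (t + τ / 2) = t + τ by ring, map_add, hτz]
  rw [chord, chord, hback, add_comm t, map_add, neg_sub]

theorem sub_eq_zero_of_isContinuousLog_chord (hτz : ϕ τ z = z) {R s : ℝ}
    (horbit : ∀ t, ϕ t z ∈ Metric.closedBall z R)
    (hs : ∀ w ∈ Metric.closedBall z R, ϕ s w ≠ w) {θ : ℝ → ℂ}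
    (hθ : IsContinuousLog θ (ϕ.chord z s)) : θ τ - θ 0 = 0 := by
  let c : ℝ → ℝ → ℂ := fun u t => z + u • (ϕ t z - z)
  have hc : ∀ u ∈ Icc (0 : ℝ) 1, ∀ t, c u t ∈ Metric.closedBall z R := fun u hu t =>
    (convex_closedBall z R).add_smul_sub_mem (by simpa using horbit 0) (horbit t) hu
  have hconst : IsContinuousLog (fun _ => Complex.log (ϕ s z - z)) (fun t => ϕ s (c 0 t) - c 0 t) :=
    ⟨continuous_const, fun t => by
      simp [c, Complex.exp_log (sub_ne_zero.2 (hs z (by simpa using horbit 0)))]⟩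
  have hθ' : IsContinuousLog θ (fun t => ϕ s (c 1 t) - c 1 t) := by
    convert hθ using 2 with t
    simp [c, chord]
  have := IsContinuousLog.sub_eq_of_homotopy (F := fun u t => ϕ s (c u t) - c u t) (T := τ)
    (by fun_prop) zero_le_one (fun u hu t => sub_ne_zero.2 (hs _ (hc u hu t)))
    (fun u _ => by simp [c, hτz]) hconst hθ'
  simpa using this.symm

theorem exists_forall_apply_eq_self_of_isLeast_period
    (hτ : IsLeast {t | 0 < t ∧ ϕ t z = z} τ) : ∃ q, ∀ t, ϕ t q = q := by
  by_contra! hfree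
  obtain ⟨hτ0, hτz⟩ := hτ.1
  have hperiodic : Periodic (fun t => ϕ t z) τ := fun t =>
    show ϕ (t + τ) z = ϕ t z by rw [map_add, hτz]
  obtain ⟨R, hR⟩ := (Metric.isBounded_iff_subset_closedBall z).1 <|
    hperiodic.isBounded_of_continuous hτ0.ne' (ϕ.continuous continuous_id continuous_const)
  obtain ⟨δ, hδ, hδR⟩ :=
    ϕ.exists_pos_forall_apply_ne_self (isCompact_closedBall z R) fun w _ => hfree w
  set s₀ := min (δ / 2) (τ / 2)
  have hs₀ : 0 < s₀ := lt_min (half_pos hδ) (half_pos hτ0)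
  have hs₀τ : s₀ ≤ τ / 2 := min_le_right _ _
  have hchord : ∀ s ∈ Icc s₀ (τ / 2), ∀ t, ϕ.chord z s t ≠ 0 := fun s hs =>
    chord_ne_zero hτ ⟨hs₀.trans_le hs.1, hs.2.trans_lt (half_lt_self hτ0)⟩
  have hcont : ∀ s, Continuous (ϕ.chord z s) := fun s =>
    (continuous_chord ϕ z).comp (continuous_const.prodMk continuous_id)
  obtain ⟨θ₀, hθ₀⟩ := exists_isContinuousLog (hcont s₀) (hchord s₀ (left_mem_Icc.2 hs₀τ))
  obtain ⟨θ₁, hθ₁⟩ := exists_isContinuousLog (hcont _) (hchord _ (right_mem_Icc.2 hs₀τ))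
  have hnull : θ₀ τ - θ₀ 0 = 0 := sub_eq_zero_of_isContinuousLog_chord hτz
    (fun t => hR ⟨t, rfl⟩) (hδR s₀ ⟨hs₀, (min_le_left _ _).trans_lt (half_lt_self hδ)⟩) hθ₀
  have hinvariant := IsContinuousLog.sub_eq_of_homotopy (continuous_chord ϕ z) hs₀τ hchord
    (fun s _ => chord_period hτz s) hθ₀ hθ₁
  refine hθ₁.sub_ne_zero_of_antiperiodic (antiperiodic_chord_half hτz)
    (hchord _ (right_mem_Icc.2 hs₀τ) 0) ?_
  rw [add_halves, ← hinvariant, hnull]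

end Plane

end Flow

noncomputable def IsFlow.toComplexFlow {φ : ℝ → ℝ × ℝ → ℝ × ℝ} (hφ : IsFlow φ) : Flow ℝ ℂ where
  toFun t z := Complex.equivRealProdCLM.symm (φ t (Complex.equivRealProdCLM z))
  cont' := Complex.equivRealProdCLM.symm.continuous.comp <|
    hφ.1.comp (continuous_fst.prodMk (Complex.equivRealProdCLM.continuous.comp continuous_snd))
  map_add' s t z := by simp only [ContinuousLinearEquiv.apply_symm_apply, hφ.2.2]
  map_zero' z := by simp only [hφ.2.1, ContinuousLinearEquiv.symm_apply_apply]

/-- Poincaré–Bendixson consequence: a continuous flow on ℝ²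
with a nonstationary periodic point has a fixedpoint. -/
theorem periodic_orbit_forces_fixedpoint
    (φ : ℝ → ℝ × ℝ → ℝ × ℝ) (hφ : IsFlow φ)
    (p : ℝ × ℝ) (T : ℝ) (hT : 0 < T) (hper : φ T p = p)
    (hns : ∃ t : ℝ, φ t p ≠ p) :
    ∃ q : ℝ × ℝ, ∀ t : ℝ, φ t q = q := by
  let E := Complex.equivRealProdCLM
  have hconj : ∀ t z, hφ.toComplexFlow t z = E.symm (φ t (E z)) := fun _ _ => rfl
  obtain ⟨τ, hτ⟩ := hφ.toComplexFlow.exists_isLeast_period (x := E.symm p) hT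
    (by simp [hconj, hper]) (by simpa [hconj] using hns)
  obtain ⟨q, hq⟩ := Flow.exists_forall_apply_eq_self_of_isLeast_period hτ
  exact ⟨E q, fun t => by simpa [hconj] using congrArg E (hq t)⟩
end

section
/- Let φ be a fixedpoint-free continuous flow on ℝ². Let A be an arc from x to y and B an arc from y to z, each transverse to the orbit foliation of φ (each meets every orbit in at most one point), and suppose A \ {y} and B \ {y} lie in different connected components of ℝ² \ O_φ(y). Then A ∪ B is an arc from x to z transverse to the orbit foliation: it meets every orbit of φ in at most one point. -/
open Filter Topology Function Set

/-- `A` is an arc from `a` to `b`: the image of a continuous injective map on `[0,1]`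
sending the endpoints to `a` and `b`. -/
def IsArcFromTo (A : Set (ℝ × ℝ)) (a b : ℝ × ℝ) : Prop :=
  ∃ g : ℝ → ℝ × ℝ, ContinuousOn g (Set.Icc 0 1) ∧ Set.InjOn g (Set.Icc 0 1) ∧
    g '' Set.Icc 0 1 = A ∧ g 0 = a ∧ g 1 = b

/-- A set is transverse to the orbit foliation of `φ`: it meets each orbit in at most
one point. -/
def TransverseSet (φ : ℝ → ℝ × ℝ → ℝ × ℝ) (A : Set (ℝ × ℝ)) : Prop :=
  ∀ q₁ ∈ A, ∀ q₂ ∈ A, flowOrbit φ q₁ = flowOrbit φ q₂ → q₁ = q₂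

lemma mem_own_flowOrbit {φ : ℝ → ℝ × ℝ → ℝ × ℝ} (hφ : IsFlow φ) (p : ℝ × ℝ) :
    p ∈ flowOrbit φ p := ⟨0, hφ.2.1 p⟩

lemma flowOrbit_eq_of_mem {φ : ℝ → ℝ × ℝ → ℝ × ℝ} (hφ : IsFlow φ) {p q : ℝ × ℝ}
    (h : q ∈ flowOrbit φ p) : flowOrbit φ q = flowOrbit φ p := by
  obtain ⟨t, rfl⟩ := h
  ext r
  constructor
  · rintro ⟨s, rfl⟩
    exact ⟨s + t, (hφ.2.2 s t p).symm⟩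
  · rintro ⟨s, rfl⟩
    exact ⟨s - t, by show φ (s - t) (φ t p) = φ s p; rw [hφ.2.2, sub_add_cancel]⟩

lemma flowOrbit_preconnected {φ : ℝ → ℝ × ℝ → ℝ × ℝ} (hφ : IsFlow φ) (p : ℝ × ℝ) :
    IsPreconnected (flowOrbit φ p) :=
  isPreconnected_range (hφ.1.comp (continuous_id.prodMk continuous_const))

/-- the union of two transverse arcs `A` (from `x` to `y`) and `B`
(from `y` to `z`) lying on opposite sides of the orbit `O_φ(y)` is a transverse arc
from `x` to `z`. -/
theorem union_of_transverse_arcs_transverse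
    (φ : ℝ → ℝ × ℝ → ℝ × ℝ) (hφ : IsFlow φ) (hfree : FixedpointFree φ)
    (x y z : ℝ × ℝ) (A B : Set (ℝ × ℝ))
    (hA : IsArcFromTo A x y) (hB : IsArcFromTo B y z)
    (hAt : TransverseSet φ A) (hBt : TransverseSet φ B)
    (hAc : A \ {y} ⊆ (flowOrbit φ y)ᶜ) (hBc : B \ {y} ⊆ (flowOrbit φ y)ᶜ)
    (hsep : ∀ a ∈ A \ {y}, ∀ b ∈ B \ {y},
      connectedComponentIn (flowOrbit φ y)ᶜ a ≠ connectedComponentIn (flowOrbit φ y)ᶜ b) :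
    IsArcFromTo (A ∪ B) x z ∧ TransverseSet φ (A ∪ B) := by
  classical
  -- A ∩ B ⊆ {y}
  have hAB : ∀ p ∈ A, p ∈ B → p = y := by
    intro p hpA hpB
    by_contra hne
    exact hsep p ⟨hpA, hne⟩ p ⟨hpB, hne⟩ rfl
  -- mixed transversality
  have hmix : ∀ q₁ ∈ A, ∀ q₂ ∈ B, flowOrbit φ q₁ = flowOrbit φ q₂ → q₁ = q₂ := by
    intro q₁ hq₁ q₂ hq₂ horb
    by_cases h1 : q₁ = y
    · by_cases h2 : q₂ = y
      · rw [h1, h2]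
      · exfalso
        apply hBc ⟨hq₂, h2⟩
        have : q₂ ∈ flowOrbit φ q₁ := horb ▸ mem_own_flowOrbit hφ q₂
        rwa [h1] at this
    · by_cases h2 : q₂ = y
      · exfalso
        apply hAc ⟨hq₁, h1⟩
        have : q₁ ∈ flowOrbit φ q₂ := horb ▸ mem_own_flowOrbit hφ q₁
        rwa [h2] at this
      · exfalso
        -- orbit of q₁ avoids orbit of y
        have hsub : flowOrbit φ q₁ ⊆ (flowOrbit φ y)ᶜ := by
          intro r hr hry
          apply hAc ⟨hq₁, h1⟩
          have e1 : flowOrbit φ r = flowOrbit φ q₁ := flowOrbit_eq_of_mem hφ hr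
          have e2 : flowOrbit φ r = flowOrbit φ y := flowOrbit_eq_of_mem hφ hry
          rw [← e2, e1]
          exact mem_own_flowOrbit hφ q₁
        have hq2mem : q₂ ∈ flowOrbit φ q₁ := horb ▸ mem_own_flowOrbit hφ q₂
        have hcc : flowOrbit φ q₁ ⊆ connectedComponentIn (flowOrbit φ y)ᶜ q₁ :=
          (flowOrbit_preconnected hφ q₁).subset_connectedComponentIn
            (mem_own_flowOrbit hφ q₁) hsub
        exact hsep q₁ ⟨hq₁, h1⟩ q₂ ⟨hq₂, h2⟩ (connectedComponentIn_eq (hcc hq2mem))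
  constructor
  · -- the arc
    obtain ⟨g, hgc, hgi, hgim, hg0, hg1⟩ := hA
    obtain ⟨f, hfc, hfi, hfim, hf0, hf1⟩ := hB
    set h : ℝ → ℝ × ℝ :=
      (Set.Iic (1/2 : ℝ)).piecewise (fun t => g (2*t)) (fun t => f (2*t - 1)) with hh
    have hev1 : ∀ t : ℝ, t ≤ 1/2 → h t = g (2*t) := fun t ht =>
      Set.piecewise_eq_of_mem _ _ _ ht
    have hev2 : ∀ t : ℝ, ¬ t ≤ 1/2 → h t = f (2*t - 1) := fun t ht =>
      Set.piecewise_eq_of_notMem _ _ _ ht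
    refine ⟨h, ?_, ?_, ?_, ?_, ?_⟩
    · -- continuity
      have c1 : ContinuousOn (fun t : ℝ => g (2*t)) (Icc 0 (1/2)) := by
        apply hgc.comp (by fun_prop : Continuous fun t : ℝ => 2 * t).continuousOn
        intro t ht
        simp only [Set.mem_Icc]
        constructor <;> linarith [ht.1, ht.2]
      have c2 : ContinuousOn (fun t : ℝ => f (2*t - 1)) (Icc (1/2) 1) := by
        apply hfc.comp (by fun_prop : Continuous fun t : ℝ => 2 * t - 1).continuousOn
        intro t ht
        simp only [Set.mem_Icc]
        constructor <;> linarith [ht.1, ht.2]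
      have hfr : Icc (0:ℝ) (1/2) ∩ frontier (Iic (1/2 : ℝ))
          = Icc (1/2 : ℝ) 1 ∩ frontier (Iic (1/2 : ℝ)) := by
        rw [frontier_Iic]
        ext u
        simp only [Set.mem_inter_iff, Set.mem_singleton_iff, Set.mem_Icc]
        constructor
        · rintro ⟨_, rfl⟩; norm_num
        · rintro ⟨_, rfl⟩; norm_num
      have heq : EqOn (fun t : ℝ => g (2*t)) (fun t : ℝ => f (2*t - 1))
          (Icc (0:ℝ) (1/2) ∩ frontier (Iic (1/2 : ℝ))) := by
        intro u hu
        rw [frontier_Iic] at hu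
        have : u = 1/2 := hu.2
        subst this
        norm_num [hg1, hf0]
      have key := continuousOn_piecewise_ite c1 c2 hfr heq
      have hite : (Set.Iic (1/2 : ℝ)).ite (Icc (0:ℝ) (1/2)) (Icc (1/2 : ℝ) 1)
          = Icc (0:ℝ) 1 := by
        ext u
        simp only [Set.ite, Set.mem_union, Set.mem_inter_iff, Set.mem_diff,
          Set.mem_Icc, Set.mem_Iic]
        constructor
        · rintro (⟨⟨h1, h2⟩, _⟩ | ⟨⟨h1, h2⟩, _⟩) <;> constructor <;> linarith
        · rintro ⟨h1, h2⟩
          by_cases hu : u ≤ 1/2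
          · exact Or.inl ⟨⟨h1, hu⟩, hu⟩
          · exact Or.inr ⟨⟨by linarith, h2⟩, hu⟩
      rwa [hite] at key
    · -- injectivity
      intro s hs t ht hst
      by_cases h1 : s ≤ 1/2 <;> by_cases h2 : t ≤ 1/2
      · rw [hev1 s h1, hev1 t h2] at hst
        have := hgi ⟨by linarith [hs.1], by linarith⟩ ⟨by linarith [ht.1], by linarith⟩ hst
        linarith
      · exfalso
        rw [hev1 s h1, hev2 t h2] at hst
        have hpA : g (2*s) ∈ A := hgim ▸ ⟨2*s, ⟨by linarith [hs.1], by linarith⟩, rfl⟩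
        have hpB : g (2*s) ∈ B := by
          rw [hst]
          exact hfim ▸ ⟨2*t - 1, ⟨by linarith, by linarith [ht.2]⟩, rfl⟩
        have hy : g (2*s) = y := hAB _ hpA hpB
        have hfy : f (2*t - 1) = f 0 := by rw [← hst, hy, hf0]
        have : (2*t - 1 : ℝ) = 0 :=
          hfi ⟨by linarith, by linarith [ht.2]⟩ ⟨le_refl 0, by norm_num⟩ hfy
        linarith
      · exfalso
        rw [hev2 s h1, hev1 t h2] at hst
        have hpA : g (2*t) ∈ A := hgim ▸ ⟨2*t, ⟨by linarith [ht.1], by linarith⟩, rfl⟩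
        have hpB : g (2*t) ∈ B := by
          rw [← hst]
          exact hfim ▸ ⟨2*s - 1, ⟨by linarith, by linarith [hs.2]⟩, rfl⟩
        have hy : g (2*t) = y := hAB _ hpA hpB
        have hfy : f (2*s - 1) = f 0 := by rw [hst, hy, hf0]
        have : (2*s - 1 : ℝ) = 0 :=
          hfi ⟨by linarith, by linarith [hs.2]⟩ ⟨le_refl 0, by norm_num⟩ hfy
        linarith
      · rw [hev2 s h1, hev2 t h2] at hst
        have := hfi ⟨by linarith, by linarith [hs.2]⟩ ⟨by linarith, by linarith [ht.2]⟩ hst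
        linarith
    · -- image
      ext p
      constructor
      · rintro ⟨t, ht, rfl⟩
        by_cases h1 : t ≤ 1/2
        · rw [hev1 t h1]
          exact Or.inl (hgim ▸ ⟨2*t, ⟨by linarith [ht.1], by linarith⟩, rfl⟩)
        · rw [hev2 t h1]
          exact Or.inr (hfim ▸ ⟨2*t - 1, ⟨by linarith, by linarith [ht.2]⟩, rfl⟩)
      · rintro (hp | hp)
        · rw [← hgim] at hp
          obtain ⟨s, hs, rfl⟩ := hp
          refine ⟨s/2, ⟨by linarith [hs.1], by linarith [hs.2]⟩, ?_⟩
          rw [hev1 _ (by linarith [hs.2])]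
          congr 1
          ring
        · rw [← hfim] at hp
          obtain ⟨s, hs, rfl⟩ := hp
          by_cases hs0 : s = 0
          · refine ⟨1/2, ⟨by norm_num, by norm_num⟩, ?_⟩
            rw [hev1 _ le_rfl]
            norm_num [hg1, hs0, hf0]
          · refine ⟨(s+1)/2, ⟨by linarith [hs.1], by linarith [hs.2]⟩, ?_⟩
            have hs0' : 0 < s := lt_of_le_of_ne hs.1 (Ne.symm hs0)
            rw [hev2 _ (by intro hc; nlinarith)]
            congr 1
            ring
    · rw [hev1 0 (by norm_num)]
      norm_num [hg0]
    · rw [hev2 1 (by norm_num)]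
      norm_num [hf1]
  · -- transversality
    rintro q₁ (hq₁ | hq₁) q₂ (hq₂ | hq₂) horb
    · exact hAt q₁ hq₁ q₂ hq₂ horb
    · exact hmix q₁ hq₁ q₂ hq₂ horb
    · exact (hmix q₂ hq₂ q₁ hq₁ horb.symm).symm
    · exact hBt q₁ hq₁ q₂ hq₂ horb
end
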